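/- arXiv:2110.12407 — 2 statements merged into one kernel-verified Lean document; each statement's English description precedes it below -/
import Mathlib

section
/- Let $P \subseteq (0,1)$ be the range of a strictly decreasing sequence converging to $0$, and let $g : \mathbb{R}^m \to \mathbb{R}$ be the linear map $g(x) = \sum_{i=1}^m \lambda_i x_i$ with all $\lambda_i \in \mathbb{R}$. Then every accumulation point of $g(P^m)$ that is not attained as $g$ of a point of $P^m$ lies in $\bigcup_{A \subsetneq \{1,\ldots,m\}} \overline{g_A(P^{|A|})}$, where $g_A(y) = \sum_{i \in A} \lambda_i y_i$ (with the coordinates outside $A$ set to $0$). -/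
open Filter Topology

private lemma aux_isolated (u : ℕ → ℝ) (hu : StrictAnti u) (k : ℕ) :
    ∃ ε > 0, ∀ j, |u j - u k| < ε → j = k := by
  match k with
  | 0 =>
    refine ⟨u 0 - u 1, sub_pos.2 (hu Nat.zero_lt_one), fun j hj => ?_⟩
    rw [abs_sub_lt_iff] at hj
    by_contra hne
    have h1 : 1 ≤ j := Nat.one_le_iff_ne_zero.2 hne
    have := hu.antitone h1
    linarith [hj.2]
  | k + 1 =>
    refine ⟨min (u k - u (k+1)) (u (k+1) - u (k+2)),
      lt_min (sub_pos.2 (hu (Nat.lt_succ_self k))) (sub_pos.2 (hu (Nat.lt_succ_self _))),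
      fun j hj => ?_⟩
    rw [abs_sub_lt_iff] at hj
    rcases lt_trichotomy j (k+1) with h | h | h
    · have hj' : j ≤ k := Nat.lt_succ_iff.1 h
      have h2 := hu.antitone hj'
      have h3 := min_le_left (u k - u (k+1)) (u (k+1) - u (k+2))
      linarith [hj.1]
    · exact h
    · have hj' : k + 2 ≤ j := h
      have h2 := hu.antitone hj'
      have h3 := min_le_right (u k - u (k+1)) (u (k+1) - u (k+2))
      linarith [hj.2]

private lemma aux_const (u : ℕ → ℝ) (hu : StrictAnti u)
    (hu0 : Tendsto u atTop (𝓝 0)) (hupos : ∀ n, 0 < u n)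
    (v : ℕ → ℝ) (hv : ∀ n, v n ∈ Set.range u) (c : ℝ) (hc : c ≠ 0)
    (hvc : Tendsto v atTop (𝓝 c)) :
    c ∈ Set.range u ∧ ∀ᶠ n in atTop, v n = c := by
  have hc0 : 0 < c := by
    have h0 : 0 ≤ c := ge_of_tendsto' hvc (fun n => by
      obtain ⟨j, hj⟩ := hv n; rw [← hj]; exact (hupos j).le)
    exact lt_of_le_of_ne h0 (Ne.symm hc)
  obtain ⟨N, hN⟩ := (eventually_atTop).1 (hu0.eventually (eventually_lt_nhds hc0))
  have huNc : u N < c := hN N le_rfl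
  have hev : ∀ᶠ n in atTop, v n ∈ (((Finset.range N).image u : Finset ℝ) : Set ℝ) := by
    filter_upwards [hvc.eventually (eventually_gt_nhds huNc)] with n hn
    obtain ⟨j, hj⟩ := hv n
    have hjN : j < N := by
      by_contra h
      rw [← hj] at hn
      have := hu.antitone (le_of_not_gt h)
      linarith
    rw [← hj]
    exact Finset.mem_coe.2 (Finset.mem_image.2 ⟨j, Finset.mem_range.2 hjN, rfl⟩)
  have hclosed : IsClosed (((Finset.range N).image u : Finset ℝ) : Set ℝ) :=
    (Finset.finite_toSet _).isClosed
  have hcmem : c ∈ (((Finset.range N).image u : Finset ℝ) : Set ℝ) :=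
    hclosed.mem_of_tendsto hvc hev
  obtain ⟨k, _, hk⟩ := Finset.mem_image.1 (Finset.mem_coe.1 hcmem)
  refine ⟨⟨k, hk⟩, ?_⟩
  obtain ⟨ε, hε, hiso⟩ := aux_isolated u hu k
  filter_upwards [hvc.eventually (Metric.ball_mem_nhds c hε)] with n hn
  obtain ⟨j, hj⟩ := hv n
  rw [Real.dist_eq, ← hj, ← hk] at hn
  rw [← hj, hiso j hn, hk]

theorem stmt_10 (P : Set ℝ) (hP : P ⊆ Set.Ioo 0 1)
    (u : ℕ → ℝ) (hu : StrictAnti u) (hu0 : Filter.Tendsto u Filter.atTop (nhds 0))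
    (hPu : P = Set.range u)
    (m : ℕ) (lam : Fin m → ℝ) :
    ∀ z : ℝ,
      AccPt z (Filter.principal ((fun y : Fin m → ℝ => ∑ i, lam i * y i) '' {y | ∀ i, y i ∈ P})) →
      z ∉ (fun y : Fin m → ℝ => ∑ i, lam i * y i) '' {y | ∀ i, y i ∈ P} →
      ∃ A : Finset (Fin m), A ≠ Finset.univ ∧
        z ∈ closure ((fun y : Fin m → ℝ => ∑ i ∈ A, lam i * y i) '' {y | ∀ i, y i ∈ P}) := by
  intro z hacc hz
  have hupos : ∀ n, 0 < u n := fun n => (hP (by rw [hPu]; exact ⟨n, rfl⟩)).1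
  rw [accPt_iff_nhds] at hacc
  have hseq : ∀ n : ℕ, ∃ y : Fin m → ℝ, (∀ i, y i ∈ P) ∧
      dist (∑ i, lam i * y i) z < 1/(n+1) ∧ (∑ i, lam i * y i) ≠ z := by
    intro n
    obtain ⟨w, ⟨hw1, hw2⟩, hw3⟩ := hacc (Metric.ball z (1/(n+1)))
      (Metric.ball_mem_nhds z (by positivity))
    obtain ⟨y, hy, hgy⟩ := hw2
    have hgy' : ∑ i, lam i * y i = w := hgy
    exact ⟨y, hy, by rwa [hgy'], by rwa [hgy']⟩
  choose y hyP hyd hyne using hseq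
  have hgyz : Tendsto (fun n => ∑ i, lam i * y n i) atTop (𝓝 z) := by
    rw [tendsto_iff_dist_tendsto_zero]
    refine squeeze_zero (fun n => dist_nonneg) (fun n => (hyd n).le) ?_
    exact tendsto_one_div_add_atTop_nhds_zero_nat
  have hK : IsCompact (Set.Icc (0 : Fin m → ℝ) 1) := isCompact_Icc
  have hyK : ∀ n, y n ∈ Set.Icc (0 : Fin m → ℝ) 1 :=
    fun n => ⟨fun i => (hP (hyP n i)).1.le, fun i => (hP (hyP n i)).2.le⟩
  obtain ⟨x, _, φ, hφ, hxlim⟩ := hK.tendsto_subseq hyK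
  have hcoord : ∀ i, Tendsto (fun n => y (φ n) i) atTop (𝓝 (x i)) :=
    fun i => tendsto_pi_nhds.1 hxlim i
  have hglim : Tendsto (fun n => ∑ i, lam i * y (φ n) i) atTop (𝓝 (∑ i, lam i * x i)) :=
    tendsto_finset_sum _ (fun i _ => (hcoord i).const_mul (lam i))
  have hzgx : z = ∑ i, lam i * x i :=
    tendsto_nhds_unique (hgyz.comp hφ.tendsto_atTop) hglim
  have hxi : ∀ i, x i ≠ 0 → x i ∈ P ∧ ∀ᶠ n in atTop, y (φ n) i = x i := by
    intro i hne
    obtain ⟨hmem, hev⟩ := aux_const u hu hu0 hupos (fun n => y (φ n) i)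
      (fun n => by rw [← hPu]; exact hyP (φ n) i) (x i) hne (hcoord i)
    exact ⟨by rw [hPu]; exact hmem, hev⟩
  by_cases hA : (Finset.univ.filter (fun i => x i ≠ 0)) = Finset.univ
  · exfalso
    have hall : ∀ i, x i ≠ 0 := by
      intro i
      have hi : i ∈ Finset.univ.filter (fun i => x i ≠ 0) := by
        rw [hA]; exact Finset.mem_univ i
      exact (Finset.mem_filter.1 hi).2
    have hev : ∀ᶠ n in atTop, ∀ i, y (φ n) i = x i :=
      eventually_all.2 fun i => (hxi i (hall i)).2
    obtain ⟨n, hn⟩ := hev.exists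
    apply hyne (φ n)
    have heq : ∑ i, lam i * y (φ n) i = ∑ i, lam i * x i :=
      Finset.sum_congr rfl fun i _ => by rw [hn i]
    rw [heq, ← hzgx]
  · refine ⟨_, hA, subset_closure ?_⟩
    refine ⟨fun i => if x i = 0 then u 0 else x i, fun i => ?_, ?_⟩
    · show (if x i = 0 then u 0 else x i) ∈ P
      by_cases h : x i = 0
      · rw [if_pos h, hPu]; exact ⟨0, rfl⟩
      · rw [if_neg h]; exact (hxi i h).1
    · have h1 : ∑ i ∈ Finset.univ.filter (fun i => x i ≠ 0),
          lam i * (if x i = 0 then u 0 else x i)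
          = ∑ i ∈ Finset.univ.filter (fun i => x i ≠ 0), lam i * x i :=
        Finset.sum_congr rfl fun i hi => by rw [if_neg (Finset.mem_filter.1 hi).2]
      have h2 : ∑ i ∈ Finset.univ.filter (fun i => x i ≠ 0), lam i * x i
          = ∑ i, lam i * x i := by
        apply Finset.sum_subset (Finset.subset_univ _)
        intro i _ hi
        have hx0 : x i = 0 := by
          by_contra h
          exact hi (Finset.mem_filter.2 ⟨Finset.mem_univ i, h⟩)
        rw [hx0, mul_zero]
      simp only [h1, h2]
      exact hzgx.symm
end

section
/- Let $X \subseteq \mathbb{R}$ be a closed set with empty interior, and define $X' = \{x \in X : x \text{ is not isolated in } X\}$ (the Cantor–Bendixson derivative). If $X$ is a union of $n+1$ discrete sets, then $X'$ is a union of $n$ discrete sets. -/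
/-!
Let `Xᵈ[k]` be the `k`-th Cantor–Bendixson derivative. A point of `Xᵈ[k + 1]` lying in one of the
discrete pieces `D i` has a punctured neighbourhood missing `D i`, yet it still accumulates
`Xᵈ[k]` there; by induction, a part of `X` covered by `m` discrete sets has empty `m`-th
derivative, so `Xᵈ[n + 1] = ∅`. Hence `X'` is the union of the `n` layers
`Xᵈ[k] \ Xᵈ[k + 1]`, `1 ≤ k ≤ n`, and each layer consists of points isolated in `Xᵈ[k]`.
-/

open Set Filter Topology CantorBendixson

theorem Antitone.sdiff_eq_iUnion_sdiff_succ {α : Type*} {A : ℕ → Set α} (hA : Antitone A)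
    (n : ℕ) : A 0 \ A n = ⋃ i : Fin n, A i \ A (i + 1) := by
  refine Subset.antisymm (fun x ⟨hx0, hxn⟩ => ?_) ?_
  · obtain ⟨j, hxj, hxj'⟩ := Nat.exists_not_and_succ_of_not_zero_of_exists (p := (x ∉ A ·))
      (not_not.2 hx0) ⟨n, hxn⟩
    have hjn : j < n := lt_of_not_ge fun hnj => hxn (hA hnj (not_not.1 hxj))
    exact mem_iUnion.2 ⟨⟨j, hjn⟩, not_not.1 hxj, hxj'⟩
  · exact iUnion_subset fun i => sdiff_subset_sdiff (hA (Nat.zero_le _)) (hA i.2)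

variable {X : Type*} [TopologicalSpace X]

theorem isDiscrete_sdiff_relDerivedSet (s : Set X) : IsDiscrete (s \ relDerivedSet s) := by
  refine isDiscrete_iff_forall_mem_exists_isOpen.2 fun x hx => ?_
  have hnacc : ¬ AccPt x (𝓟 s) := fun h => hx.2 ⟨h, hx.1⟩
  simp only [accPt_iff_nhds, not_forall, not_exists, not_and, not_not] at hnacc
  obtain ⟨U, hU, hUs⟩ := hnacc
  obtain ⟨V, hVU, hV, hxV⟩ := mem_nhds_iff.1 hU
  refine ⟨V, hV, Subset.antisymm (fun y hy => hUs y ⟨hVU hy.1, hy.2.1⟩) ?_⟩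
  rintro y rfl
  exact ⟨hxV, hx⟩

theorem iteratedDerivedSet_natCast_succ (s : Set X) (k : ℕ) :
    sᵈ[((k + 1 : ℕ) : Ordinal)] = relDerivedSet sᵈ[(k : Ordinal)] := by
  rw [Nat.cast_succ, iteratedDerivedSet_succ]

theorem IsOpen.inter_iteratedDerivedSet_card_eq_empty [T1Space X] {ι : Type*}
    {D : ι → Set X} (hD : ∀ i, IsDiscrete (D i)) {s V : Set X} {T : Finset ι} (hV : IsOpen V)
    (hVs : V ∩ s ⊆ ⋃ i ∈ T, D i) : V ∩ sᵈ[(T.card : Ordinal)] = ∅ := by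
  classical
  induction hk : T.card generalizing T V with
  | zero => simpa [Finset.card_eq_zero.1 hk] using hVs
  | succ k ih =>
    refine eq_empty_of_forall_notMem fun y ⟨hyV, hy⟩ => ?_
    rw [iteratedDerivedSet_natCast_succ] at hy
    have hys : y ∈ s := by simpa using iteratedDerivedSet_antitone s zero_le hy.2
    obtain ⟨i, hiT, hyD⟩ := mem_iUnion₂.1 (hVs ⟨hyV, hys⟩)
    obtain ⟨U, hU, hUD⟩ := isDiscrete_iff_forall_mem_exists_isOpen.1 (hD i) y hyD
    have hyU : y ∈ U := (hUD.ge rfl).1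
    have hWs : ((V ∩ U) \ {y}) ∩ s ⊆ ⋃ j ∈ T.erase i, D j := by
      rintro z ⟨⟨⟨hzV, hzU⟩, hzy⟩, hzs⟩
      obtain ⟨j, hjT, hzD⟩ := mem_iUnion₂.1 (hVs ⟨hzV, hzs⟩)
      have hji : j ≠ i := by
        rintro rfl
        exact hzy (hUD.le ⟨hzU, hzD⟩)
      exact mem_iUnion₂.2 ⟨j, Finset.mem_erase.2 ⟨hji, hjT⟩, hzD⟩
    have hempty := ih ((hV.inter hU).sdiff isClosed_singleton) hWs
      (by rw [Finset.card_erase_of_mem hiT, hk, Nat.add_sub_cancel])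
    obtain ⟨z, ⟨⟨hzV, hzU⟩, hzs⟩, hzy⟩ :=
      accPt_iff_nhds.1 hy.1 _ ((hV.inter hU).mem_nhds ⟨hyV, hyU⟩)
    exact hempty.subset ⟨⟨⟨hzV, hzU⟩, hzy⟩, hzs⟩

theorem iteratedDerivedSet_card_eq_empty [T1Space X] {ι : Type*} [Fintype ι]
    {D : ι → Set X} (hD : ∀ i, IsDiscrete (D i)) {s : Set X} (hs : s ⊆ ⋃ i, D i) :
    sᵈ[(Fintype.card ι : Ordinal)] = ∅ := by
  simpa using isOpen_univ.inter_iteratedDerivedSet_card_eq_empty hD (T := Finset.univ)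
    (by simpa using hs)

theorem stmt_12_general (X : Set ℝ)
    (n : ℕ) (D : Fin (n + 1) → Set ℝ) (hD : X = ⋃ i, D i)
    (hdisc : ∀ i, ∀ x ∈ D i, ∃ U : Set ℝ, IsOpen U ∧ U ∩ D i = {x}) :
    ∃ E : Fin n → Set ℝ,
      {x ∈ X | AccPt x (Filter.principal X)} = ⋃ i, E i ∧
      ∀ i, ∀ x ∈ E i, ∃ U : Set ℝ, IsOpen U ∧ U ∩ E i = {x} := by
  set A : ℕ → Set ℝ := fun k => Xᵈ[((k + 1 : ℕ) : Ordinal)]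
  have hA : Antitone A := fun _ _ hkl => iteratedDerivedSet_antitone X (by gcongr)
  have hAn : A n = ∅ := by
    simpa only [Fintype.card_fin] using iteratedDerivedSet_card_eq_empty
      (fun i => isDiscrete_iff_forall_mem_exists_isOpen.2 (hdisc i)) hD.subset
  have hA0 : A 0 = {x ∈ X | AccPt x (𝓟 X)} := by
    ext x
    simp [A, and_comm, mem_derivedSet]
  refine ⟨fun i => A i \ A (i + 1), ?_, fun i => ?_⟩
  · rw [← hA0, ← hA.sdiff_eq_iUnion_sdiff_succ, hAn, sdiff_empty]
  · rw [← isDiscrete_iff_forall_mem_exists_isOpen]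
    simpa only [A, iteratedDerivedSet_natCast_succ _ (i + 1)] using
      isDiscrete_sdiff_relDerivedSet (A i)

theorem stmt_12 (X : Set ℝ) (hcl : IsClosed X) (hint : interior X = ∅)
    (n : ℕ) (D : Fin (n + 1) → Set ℝ) (hD : X = ⋃ i, D i)
    (hdisc : ∀ i, ∀ x ∈ D i, ∃ U : Set ℝ, IsOpen U ∧ U ∩ D i = {x}) :
    ∃ E : Fin n → Set ℝ,
      {x ∈ X | AccPt x (Filter.principal X)} = ⋃ i, E i ∧
      ∀ i, ∀ x ∈ E i, ∃ U : Set ℝ, IsOpen U ∧ U ∩ E i = {x} :=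
  stmt_12_general X n D hD hdisc
end
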